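/- arXiv:1611.01543 — 2 statements merged into one kernel-verified Lean document; each statement's English description precedes it below -/
import Mathlib

section
/- For nonnegative x, y ∈ ℝ^q, x is weakly submajorized by y if and only if x lies in the convex hull of the vectors (ε₁ y_{σ(1)}, …, ε_q y_{σ(q)}) over all sign choices ε_i ∈ {−1,1} and permutations σ of {1,…,q}. -/
open Matrix BigOperators
open scoped ComplexOrder

noncomputable def sortDesc {q : ℕ} (x : Fin q → ℝ) : Fin q → ℝ :=
  fun i => (x ∘ Tuple.sort x) i.rev

noncomputable def sval {m n : ℕ} (F : Matrix (Fin m) (Fin n) ℂ) :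
    Fin (min m n) → ℝ :=
  fun i => Real.sqrt (sortDesc (Matrix.posSemidef_conjTranspose_mul_self F).isHermitian.eigenvalues
    ⟨i, lt_of_lt_of_le i.isLt (min_le_right m n)⟩)

def IsPartialIsometry {m n : ℕ} (X : Matrix (Fin m) (Fin n) ℂ) : Prop :=
  ∀ f ∈ (LinearMap.ker (Matrix.toEuclideanLin X))ᗮ, ‖Matrix.toEuclideanLin X f‖ = ‖f‖

noncomputable def matAbs {m n : ℕ} (F : Matrix (Fin m) (Fin n) ℂ) :
    Matrix (Fin n) (Fin n) ℂ :=
  (Matrix.posSemidef_conjTranspose_mul_self F).isHermitian.eigenvectorUnitary.1 *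
    Matrix.diagonal ((↑) ∘ Real.sqrt ∘ (Matrix.posSemidef_conjTranspose_mul_self F).isHermitian.eigenvalues) *
    (star (Matrix.posSemidef_conjTranspose_mul_self F).isHermitian.eigenvectorUnitary : Matrix (Fin n) (Fin n) ℂ)

noncomputable def svdSigma {m n : ℕ} (F : Matrix (Fin m) (Fin n) ℂ) :
    Matrix (Fin m) (Fin n) ℂ :=
  fun i j => if h : (i : ℕ) = (j : ℕ) ∧ (i : ℕ) < min m n
    then (sval F ⟨i, h.2⟩ : ℂ) else 0

def IsSVD {m n : ℕ} (F : Matrix (Fin m) (Fin n) ℂ)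
    (V : Matrix (Fin m) (Fin m) ℂ) (W : Matrix (Fin n) (Fin n) ℂ) : Prop :=
  V ∈ Matrix.unitaryGroup (Fin m) ℂ ∧ W ∈ Matrix.unitaryGroup (Fin n) ℂ ∧
    F = V * svdSigma F * Wᴴ

def blockIso {m n : ℕ} (r : ℕ) (S : Matrix (Fin (m - r)) (Fin (n - r)) ℂ) :
    Matrix (Fin m) (Fin n) ℂ :=
  fun i j =>
    if (i : ℕ) < r ∧ (j : ℕ) < r then (if (i : ℕ) = (j : ℕ) then 1 else 0)
    else if h : r ≤ (i : ℕ) ∧ r ≤ (j : ℕ) then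
      S ⟨(i : ℕ) - r, by have := i.isLt; omega⟩ ⟨(j : ℕ) - r, by have := j.isLt; omega⟩
    else 0

def submajW {q : ℕ} (x y : Fin q → ℝ) : Prop :=
  ∀ k : ℕ, k ≤ q →
    (∑ i : Fin q, if (i : ℕ) < k then sortDesc x i else 0) ≤
      (∑ i : Fin q, if (i : ℕ) < k then sortDesc y i else 0)

structure SymmGauge (q : ℕ) where
  Φ : (Fin q → ℝ) → ℝ
  add_le : ∀ x y, Φ (x + y) ≤ Φ x + Φ y
  smul_eq : ∀ (c : ℝ) x, Φ (c • x) = |c| * Φ x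
  eq_zero : ∀ x, Φ x = 0 → x = 0
  symm : ∀ (σ : Equiv.Perm (Fin q)) (ε : Fin q → ℝ) (x : Fin q → ℝ),
    (∀ i, ε i = 1 ∨ ε i = -1) → Φ (fun i => ε i * x (σ i)) = Φ x

def SymmGauge.StrictlyConvex {q : ℕ} (G : SymmGauge q) : Prop :=
  ∀ x y, x ≠ y → G.Φ x = 1 → G.Φ y = 1 →
    ∀ t : ℝ, 0 < t → t < 1 → G.Φ (t • x + (1 - t) • y) < 1

noncomputable def gaugeNorm {m n : ℕ} (G : SymmGauge (min m n))
    (M : Matrix (Fin m) (Fin n) ℂ) : ℝ :=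
  G.Φ (sval M)

noncomputable def projMat {m : ℕ} (S : Submodule ℂ (EuclideanSpace ℂ (Fin m))) :
    Matrix (Fin m) (Fin m) ℂ :=
  Matrix.toEuclideanLin.symm (S.subtype ∘ₗ (S.orthogonalProjectionOnto).toLinearMap)

noncomputable def frobNorm {m n : ℕ} (M : Matrix (Fin m) (Fin n) ℂ) : ℝ :=
  Real.sqrt (∑ i, ∑ j, ‖M i j‖ ^ 2)

def IsMinPI {m n : ℕ} (G : SymmGauge (min m n)) (F : Matrix (Fin m) (Fin n) ℂ)
    (k : ℕ) (X : Matrix (Fin m) (Fin n) ℂ) : Prop :=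
  IsPartialIsometry X ∧ X.rank = k ∧
    ∀ Y : Matrix (Fin m) (Fin n) ℂ, IsPartialIsometry Y → Y.rank = k →
      gaugeNorm G (F - X) ≤ gaugeNorm G (F - Y)

def TriConstr {q : ℕ} (k : ℕ) (x : Fin q → ℝ) : Prop :=
  (∀ j, x j = -1 ∨ x j = 0 ∨ x j = 1) ∧ {j : Fin q | x j ≠ 0}.ncard = k


/-!
The set of vectors weakly submajorized by `y` is convex, because the sum of the `k` largest
entries is a maximum of linear functions, and for `y ≥ 0` it contains every signed permutation
of `y`; this gives `←`. Conversely, write a linear functional as `⟨c, ·⟩` and let `↓` denote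
decreasing rearrangement. For `x ≥ 0`, `⟨c, x⟩ ≤ ⟨|c|↓, x↓⟩ ≤ ⟨|c|↓, y↓⟩` by the rearrangement
inequality and Abel summation against the antitone nonnegative weights `|c|↓`, and the right-hand
side is `⟨c, z⟩` for a signed permutation `z` of `y`. So no functional separates `x` from the
convex hull of the signed permutations, and `x` lies in it.
-/

open Finset

theorem Finset.sum_le_sum_of_card_eq_of_forall_le {ι β : Type*} [AddCommMonoid β] [LinearOrder β]
    [IsOrderedAddMonoid β] {f : ι → β} {s t : Finset ι} (hst : #s = #t)
    (h : ∀ i ∈ s, ∀ j ∈ t, f i ≤ f j) : ∑ i ∈ s, f i ≤ ∑ j ∈ t, f j := by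
  rcases s.eq_empty_or_nonempty with rfl | hs
  · rw [card_empty, eq_comm, card_eq_zero] at hst
    simp [hst]
  obtain ⟨i₀, hi₀, hmax⟩ := s.exists_max_image f hs
  calc ∑ i ∈ s, f i ≤ #s • f i₀ := sum_le_card_nsmul s f _ hmax
    _ = #t • f i₀ := by rw [hst]
    _ ≤ ∑ j ∈ t, f j := card_nsmul_le_sum t f _ (h i₀ hi₀)

theorem Antitone.sum_le_sum_of_isLowerSet {ι β : Type*} [LinearOrder ι] [AddCommMonoid β]
    [LinearOrder β] [IsOrderedAddMonoid β] {f : ι → β} (hf : Antitone f) {s t : Finset ι}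
    (hst : #s = #t) (ht : IsLowerSet (t : Set ι)) : ∑ i ∈ s, f i ≤ ∑ i ∈ t, f i := by
  classical
  have hsdiff : ∑ i ∈ s \ t, f i ≤ ∑ j ∈ t \ s, f j := by
    refine sum_le_sum_of_card_eq_of_forall_le (card_sdiff_comm hst) fun i hi j hj => hf ?_
    rw [mem_sdiff] at hi hj
    exact le_of_not_ge fun hij => hi.2 (ht hij hj.1)
  rw [← sum_inter_add_sum_sdiff s t, ← sum_inter_add_sum_sdiff t s, inter_comm]
  exact add_le_add_right hsdiff _

theorem mem_convexHull_of_forall_exists_le {E : Type*} [TopologicalSpace E] [AddCommGroup E]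
    [Module ℝ E] [IsTopologicalAddGroup E] [ContinuousSMul ℝ E] [LocallyConvexSpace ℝ E]
    [T2Space E] {s : Set E} (hs : s.Finite) {x : E}
    (h : ∀ f : StrongDual ℝ E, ∃ z ∈ s, f x ≤ f z) : x ∈ convexHull ℝ s := by
  by_contra hx
  obtain ⟨f, u, hfs, hux⟩ := geometric_hahn_banach_closed_point (convex_convexHull ℝ s)
    (hs.isCompact_convexHull ℝ).isClosed hx
  obtain ⟨z, hz, hxz⟩ := h f
  linarith [hfs z (subset_convexHull ℝ s hz)]

section Submajorization

variable {q : ℕ}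

noncomputable def descPerm (x : Fin q → ℝ) : Equiv.Perm (Fin q) :=
  Fin.revPerm.trans (Tuple.sort x)

theorem sortDesc_apply (x : Fin q → ℝ) (i : Fin q) : sortDesc x i = x (descPerm x i) :=
  rfl

theorem antitone_sortDesc (x : Fin q → ℝ) : Antitone (sortDesc x) :=
  fun _ _ hij => Tuple.monotone_sort x (Fin.rev_le_rev.mpr hij)

theorem sum_mul_le_sum_sortDesc_mul_sortDesc (a b : Fin q → ℝ) :
    ∑ i, a i * b i ≤ ∑ i, sortDesc a i * sortDesc b i :=
  calc ∑ i, a i * b i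
      = ∑ i, sortDesc a i * sortDesc b (((descPerm a).trans (descPerm b).symm) i) := by
        rw [← Equiv.sum_comp (descPerm a)]
        simp [sortDesc_apply]
    _ ≤ _ := ((antitone_sortDesc a).monovary (antitone_sortDesc b)).sum_mul_comp_perm_le_sum_mul

theorem exists_perm_sum_mul_eq_sum_sortDesc_mul_sortDesc (a b : Fin q → ℝ) :
    ∃ σ : Equiv.Perm (Fin q), ∑ i, a i * b (σ i) = ∑ i, sortDesc a i * sortDesc b i :=
  ⟨(descPerm a).symm.trans (descPerm b), by
    rw [← Equiv.sum_comp (descPerm a)]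
    simp [sortDesc_apply]⟩

noncomputable def prefixSum (k : ℕ) (w : Fin q → ℝ) : ℝ :=
  ∑ i : Fin q, if (i : ℕ) < k then w i else 0

/-- `submajW x y` unfolds to `∀ k ≤ q, topSum k x ≤ topSum k y`. -/
noncomputable def topSum (k : ℕ) (x : Fin q → ℝ) : ℝ :=
  prefixSum k (sortDesc x)

theorem prefixSum_eq_sum_filter (k : ℕ) (w : Fin q → ℝ) :
    prefixSum k w = ∑ i ∈ univ.filter (fun i : Fin q => (i : ℕ) < k), w i :=
  (sum_filter _ _).symm

theorem prefixSum_of_le {k : ℕ} (hk : q ≤ k) (w : Fin q → ℝ) : prefixSum k w = ∑ i, w i :=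
  sum_congr rfl fun i _ => if_pos (i.isLt.trans_le hk)

theorem prefixSum_comp_castSucc {k : ℕ} (hk : k ≤ q) (w : Fin (q + 1) → ℝ) :
    prefixSum k (w ∘ Fin.castSucc) = prefixSum k w := by
  simp [prefixSum, Fin.sum_univ_castSucc, hk]

theorem isLowerSet_filter_val_lt (k : ℕ) :
    IsLowerSet ((univ.filter fun i : Fin q => (i : ℕ) < k : Finset (Fin q)) : Set (Fin q)) :=
  fun i j hji hj => by
    simp only [coe_filter, mem_univ, true_and, Set.mem_ofPred_eq] at hj ⊢
    exact lt_of_le_of_lt hji hj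

theorem sum_le_topSum (x : Fin q → ℝ) (s : Finset (Fin q)) :
    ∑ i ∈ s, x i ≤ topSum #s x := by
  have hcard : #(s.map (descPerm x).symm.toEmbedding) =
      #(univ.filter fun i : Fin q => (i : ℕ) < #s) := by
    rw [card_map, Fin.card_filter_val_lt,
      min_eq_right (card_le_univ s |>.trans_eq (Fintype.card_fin q))]
  calc ∑ i ∈ s, x i = ∑ i ∈ s.map (descPerm x).symm.toEmbedding, sortDesc x i := by
        simp [sum_map, sortDesc_apply]
    _ ≤ topSum #s x := by
        rw [topSum, prefixSum_eq_sum_filter]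
        exact (antitone_sortDesc x).sum_le_sum_of_isLowerSet hcard (isLowerSet_filter_val_lt _)

theorem exists_card_eq_sum_eq_topSum (x : Fin q → ℝ) {k : ℕ} (hk : k ≤ q) :
    ∃ s : Finset (Fin q), #s = k ∧ ∑ i ∈ s, x i = topSum k x := by
  refine ⟨(univ.filter (fun i : Fin q => (i : ℕ) < k)).map (descPerm x).toEmbedding, ?_, ?_⟩
  · rw [card_map, Fin.card_filter_val_lt, min_eq_right hk]
  · rw [topSum, prefixSum_eq_sum_filter, sum_map]
    rfl

theorem convexOn_topSum {k : ℕ} (hk : k ≤ q) :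
    ConvexOn ℝ Set.univ (topSum k : (Fin q → ℝ) → ℝ) := by
  refine ⟨convex_univ, fun x _ y _ a b ha hb _ => ?_⟩
  obtain ⟨s, hs, hsum⟩ := exists_card_eq_sum_eq_topSum (a • x + b • y) hk
  rw [← hsum, ← hs]
  simp only [Pi.add_apply, Pi.smul_apply, smul_eq_mul, sum_add_distrib, ← mul_sum]
  gcongr
  · exact sum_le_topSum x s
  · exact sum_le_topSum y s

/-- Abel summation, strengthened to an arbitrary lower bound `c` of `a` so that it survives the
induction on `q`. -/
theorem mul_sum_sub_le_sum_mul_sub_of_prefixSum_le {a u v : Fin q → ℝ} (ha : Antitone a)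
    (h : ∀ k ≤ q, prefixSum k u ≤ prefixSum k v) {c : ℝ} (hc : ∀ i, c ≤ a i) :
    c * (∑ i, v i - ∑ i, u i) ≤ ∑ i, a i * v i - ∑ i, a i * u i := by
  induction q generalizing c with
  | zero => simp
  | succ q ih =>
    have hinit := ih (a := a ∘ Fin.castSucc) (u := u ∘ Fin.castSucc) (v := v ∘ Fin.castSucc)
      (ha.comp_monotone Fin.strictMono_castSucc.monotone)
      (fun k hk => by
        rw [prefixSum_comp_castSucc hk, prefixSum_comp_castSucc hk]
        exact h k (Nat.le_succ_of_le hk))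
      (c := a (Fin.last q)) (fun i => ha (Fin.le_last _))
    have htotal : 0 ≤ ∑ i, v i - ∑ i, u i := by
      simpa only [prefixSum_of_le le_rfl, sub_nonneg] using h (q + 1) le_rfl
    have hlast := mul_le_mul_of_nonneg_right (hc (Fin.last q)) htotal
    simp only [Fin.sum_univ_castSucc, Function.comp_apply] at hinit hlast ⊢
    linarith

theorem sum_mul_le_sum_mul_of_prefixSum_le {a u v : Fin q → ℝ} (ha : Antitone a)
    (ha₀ : ∀ i, 0 ≤ a i) (h : ∀ k ≤ q, prefixSum k u ≤ prefixSum k v) :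
    ∑ i, a i * u i ≤ ∑ i, a i * v i := by
  have := mul_sum_sub_le_sum_mul_sub_of_prefixSum_le ha h ha₀
  linarith

def signedPerms (y : Fin q → ℝ) : Set (Fin q → ℝ) :=
  {z | ∃ (σ : Equiv.Perm (Fin q)) (ε : Fin q → ℝ),
    (∀ i, ε i = 1 ∨ ε i = -1) ∧ z = fun i => ε i * y (σ i)}

theorem signedPerms_finite (y : Fin q → ℝ) : (signedPerms y).Finite := by
  have hsigns : (Set.univ.pi fun _ : Fin q => ({1, -1} : Set ℝ)).Finite :=
    Set.Finite.pi fun _ => by simp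
  refine ((Set.finite_univ.prod hsigns).image
    fun p : Equiv.Perm (Fin q) × (Fin q → ℝ) => fun i => p.2 i * y (p.1 i)).subset ?_
  rintro z ⟨σ, ε, hε, rfl⟩
  exact ⟨(σ, ε), ⟨trivial, fun i _ => hε i⟩, rfl⟩

theorem convex_setOf_submajW (y : Fin q → ℝ) : Convex ℝ {x | submajW x y} := by
  intro x₁ h₁ x₂ h₂ a b ha hb hab k hk
  calc topSum k (a • x₁ + b • x₂) ≤ a • topSum k x₁ + b • topSum k x₂ :=
        (convexOn_topSum hk).2 trivial trivial ha hb hab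
    _ ≤ a • topSum k y + b • topSum k y := by gcongr; exacts [h₁ k hk, h₂ k hk]
    _ = topSum k y := by rw [← add_smul, hab, one_smul]

theorem submajW_of_mem_signedPerms {y z : Fin q → ℝ} (hy : ∀ i, 0 ≤ y i)
    (hz : z ∈ signedPerms y) : submajW z y := by
  obtain ⟨σ, ε, hε, rfl⟩ := hz
  intro k hk
  obtain ⟨s, rfl, hsum⟩ := exists_card_eq_sum_eq_topSum (fun i => ε i * y (σ i)) hk
  calc topSum #s (fun i => ε i * y (σ i)) = ∑ i ∈ s, ε i * y (σ i) := hsum.symm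
    _ ≤ ∑ i ∈ s, y (σ i) := by
        gcongr with i
        rcases hε i with h | h <;> rw [h] <;> linarith [hy (σ i)]
    _ = ∑ i ∈ s.map σ.toEmbedding, y i := by rw [sum_map]; rfl
    _ ≤ topSum #s y := by simpa using sum_le_topSum y (s.map σ.toEmbedding)

theorem convexHull_signedPerms_subset {y : Fin q → ℝ} (hy : ∀ i, 0 ≤ y i) :
    convexHull ℝ (signedPerms y) ⊆ {x | submajW x y} :=
  convexHull_min (fun _ hz => submajW_of_mem_signedPerms hy hz) (convex_setOf_submajW y)

theorem exists_mem_signedPerms_le_of_submajW {x y : Fin q → ℝ} (hx : ∀ i, 0 ≤ x i)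
    (hxy : submajW x y) (f : (Fin q → ℝ) →ₗ[ℝ] ℝ) :
    ∃ z ∈ signedPerms y, f x ≤ f z := by
  set c : Fin q → ℝ := fun i => f fun j => if i = j then 1 else 0
  set ε : Fin q → ℝ := fun i => if 0 ≤ c i then 1 else -1
  have hε : ∀ i, ε i = 1 ∨ ε i = -1 := fun i => by
    by_cases h : 0 ≤ c i <;> simp [ε, h]
  have hcε : ∀ i, ε i * c i = |c i| := fun i => by
    by_cases h : 0 ≤ c i
    · simp [ε, h, abs_of_nonneg h]
    · simp [ε, h, abs_of_neg (not_le.mp h)]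
  obtain ⟨σ, hσ⟩ := exists_perm_sum_mul_eq_sum_sortDesc_mul_sortDesc (fun i => |c i|) y
  refine ⟨fun i => ε i * y (σ i), ⟨σ, ε, hε, rfl⟩, ?_⟩
  rw [f.pi_apply_eq_sum_univ x, f.pi_apply_eq_sum_univ (fun i => ε i * y (σ i))]
  simp only [smul_eq_mul]
  calc ∑ i, x i * c i ≤ ∑ i, |c i| * x i :=
        sum_le_sum fun i _ => by
          rw [mul_comm]
          exact mul_le_mul_of_nonneg_right (le_abs_self _) (hx i)
    _ ≤ ∑ i, sortDesc (fun i => |c i|) i * sortDesc x i :=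
        sum_mul_le_sum_sortDesc_mul_sortDesc _ _
    _ ≤ ∑ i, sortDesc (fun i => |c i|) i * sortDesc y i :=
        sum_mul_le_sum_mul_of_prefixSum_le (antitone_sortDesc _) (fun _ => abs_nonneg _) hxy
    _ = ∑ i, ε i * y (σ i) * c i := by
        rw [← hσ]
        exact sum_congr rfl fun i _ => by rw [← hcε]; ring

end Submajorization

theorem stmt6 {q : ℕ} (x y : Fin q → ℝ) (hx : ∀ i, 0 ≤ x i) (hy : ∀ i, 0 ≤ y i) :
    submajW x y ↔ x ∈ convexHull ℝ
      {z : Fin q → ℝ | ∃ (σ : Equiv.Perm (Fin q)) (ε : Fin q → ℝ),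
        (∀ i, ε i = 1 ∨ ε i = -1) ∧ z = fun i => ε i * y (σ i)} :=
  ⟨fun hxy => mem_convexHull_of_forall_exists_le (signedPerms_finite y) fun f =>
      exists_mem_signedPerms_le_of_submajW hx hxy f.toLinearMap,
    fun hxy => convexHull_signedPerms_subset hy hxy⟩
end

section
/- Fix s₁ ≥ … ≥ s_q ≥ 0 with exactly r nonzero entries, and r < k ≤ q. Then x ∈ {−1,0,1}^q with exactly k nonzero coordinates minimizes f(x) = Σ_{j=1}^q (s_j − x_j)² if and only if x₁ = … = x_r = 1 and the remaining coordinates x_{r+1},…,x_q lie in {−1,0,1} with exactly k − r of them nonzero; in particular, there are 2^{k−r}·C(q−r, k−r) minimizers. -/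
open Matrix BigOperators
open scoped ComplexOrder

/-!
For a ternary vector `x` with `k` nonzero entries, `∑ (s j - x j)² = ‖s‖² + k - 2 ⟪s, x⟫`, so the
minimizers are the maximizers of `⟪s, x⟫`. Since `s ≥ 0` and `x j ≤ 1`, `⟪s, x⟫ ≤ ∑ s j`, with
equality exactly when `x = 1` on the support of `s`; as `s` is antitone with `r` nonzero entries, that
support is `{j < r}`, and `r < k ≤ q` makes the bound attainable. The minimizers are then counted by
choosing the `k - r` remaining nonzero positions among the last `q - r` and a sign for each.
-/

open Finset

section TernaryVectors

variable {ι : Type*} [Fintype ι]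

lemma sum_sq_eq_ncard_of_ternary {x : ι → ℝ} (hx : ∀ j, x j = -1 ∨ x j = 0 ∨ x j = 1) :
    ∑ j, x j ^ 2 = {j | x j ≠ 0}.ncard := by
  classical
  have hsq : ∀ j, x j ^ 2 = if x j ≠ 0 then 1 else 0 := fun j => by
    rcases hx j with h | h | h <;> simp [h]
  rw [sum_congr rfl fun j _ => hsq j, sum_boole, Set.ncard_eq_toFinset_card']
  simp

lemma sum_mul_le_sum_of_le_one {s x : ι → ℝ} (hs : ∀ j, 0 ≤ s j) (hx : ∀ j, x j ≤ 1) :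
    ∑ j, s j * x j ≤ ∑ j, s j :=
  sum_le_sum fun j _ => mul_le_of_le_one_right (hs j) (hx j)

lemma sum_mul_eq_sum_iff_of_le_one {s x : ι → ℝ} (hs : ∀ j, 0 ≤ s j) (hx : ∀ j, x j ≤ 1) :
    ∑ j, s j * x j = ∑ j, s j ↔ ∀ j, s j ≠ 0 → x j = 1 := by
  rw [sum_eq_sum_iff_of_le fun j _ => mul_le_of_le_one_right (hs j) (hx j)]
  refine forall_congr' fun j => ⟨fun h hj => (mul_eq_left₀ hj).1 (h (mem_univ j)), fun h _ => ?_⟩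
  by_cases hj : s j = 0
  · simp [hj]
  · simp [h hj]

lemma ncard_ne_zero_eq_add {M : Type*} [Zero M] (p : ι → Prop) {x : ι → M}
    (hx : ∀ j, ¬ p j → x j ≠ 0) :
    {j | x j ≠ 0}.ncard = {j | ¬ p j}.ncard + {j | p j ∧ x j ≠ 0}.ncard := by
  have hdisj : Disjoint {j | ¬ p j} {j | p j ∧ x j ≠ 0} :=
    Set.disjoint_left.2 fun j hj hj' => hj hj'.1
  rw [← Set.ncard_union_eq hdisj]
  congr 1
  ext j
  by_cases hj : p j <;> simp [hj, hx j]

lemma filter_piFinset_ternary_support_eq [DecidableEq ι] (p : ι → Prop) [DecidablePred p]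
    {T : Finset ι} (hT : T ⊆ ({j | p j} : Finset ι)) :
    {x ∈ Fintype.piFinset fun j => if p j then ({-1, 0, 1} : Finset ℝ) else {1} |
        ({j | p j ∧ x j ≠ 0} : Finset ι) = T} =
      Fintype.piFinset fun j => if j ∈ T then {-1, 1} else if p j then {0} else {1} := by
  ext x
  simp only [mem_filter, Fintype.mem_piFinset]
  rw [Finset.ext_iff, ← forall_and]
  refine forall_congr' fun j => ?_
  by_cases hjT : j ∈ T
  · have hj : p j := by simpa using hT hjT
    simp only [hj, hjT, mem_filter, mem_univ, true_and, iff_true, if_true, mem_insert,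
      mem_singleton]
    grind
  · by_cases hj : p j <;> simp [hj, hjT]
    grind

lemma ncard_ternary_pinned_eq [DecidableEq ι] (p : ι → Prop) [DecidablePred p] (m : ℕ) :
    {x : ι → ℝ | (∀ j, x j = -1 ∨ x j = 0 ∨ x j = 1) ∧ (∀ j, ¬ p j → x j = 1) ∧
        {j | p j ∧ x j ≠ 0}.ncard = m}.ncard = 2 ^ m * {j | p j}.ncard.choose m := by
  let X := Fintype.piFinset fun j => if p j then ({-1, 0, 1} : Finset ℝ) else {1}
  have hX : {x : ι → ℝ | (∀ j, x j = -1 ∨ x j = 0 ∨ x j = 1) ∧ (∀ j, ¬ p j → x j = 1) ∧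
      {j | p j ∧ x j ≠ 0}.ncard = m} = ↑{x ∈ X | #{j | p j ∧ x j ≠ 0} = m} := by
    ext x
    simp only [Set.mem_ofPred_eq, coe_filter, Fintype.mem_piFinset, X,
      Set.ncard_eq_toFinset_card', Set.toFinset_ofPred]
    rw [← and_assoc, ← forall_and]
    refine and_congr_left' (forall_congr' fun j => ?_)
    by_cases hj : p j <;> simp [hj]
    grind
  have hfiber : ∀ T ∈ powersetCard m {j | p j},
      {x ∈ {x ∈ X | #{j | p j ∧ x j ≠ 0} = m} | ({j | p j ∧ x j ≠ 0} : Finset ι) = T} =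
        Fintype.piFinset fun j => if j ∈ T then {-1, 1} else if p j then {0} else {1} := by
    intro T hT
    rw [mem_powersetCard] at hT
    rw [filter_filter, ← filter_piFinset_ternary_support_eq p hT.1]
    exact filter_congr fun x _ => and_iff_right_of_imp fun h => h ▸ hT.2
  have hcard : ∀ T ∈ powersetCard m {j | p j}, #(Fintype.piFinset fun j =>
      if j ∈ T then ({-1, 1} : Finset ℝ) else if p j then {0} else {1}) = 2 ^ m := fun T hT => by
    simp only [Fintype.card_piFinset, apply_ite card, card_pair (by norm_num : (-1 : ℝ) ≠ 1),
      card_singleton, ite_self]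
    rw [prod_ite_mem, univ_inter, prod_const, (mem_powersetCard.1 hT).2]
  rw [hX, Set.ncard_coe_finset,
    card_eq_sum_card_fiberwise (f := fun x => ({j | p j ∧ x j ≠ 0} : Finset ι))
      (t := powersetCard m {j | p j})]
  · rw [sum_congr rfl fun T hT => by rw [hfiber T hT, hcard T hT], sum_const, card_powersetCard,
      smul_eq_mul, mul_comm, Set.ncard_eq_toFinset_card', Set.toFinset_ofPred]
  · intro x hx
    exact mem_powersetCard.2 ⟨monotone_filter_right _ fun _ _ => And.left, (mem_filter.1 hx).2⟩

end TernaryVectors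

namespace Fin

lemma ncard_setOf_val_lt {q r : ℕ} (hrq : r ≤ q) : {j : Fin q | (j : ℕ) < r}.ncard = r := by
  rw [Set.ncard_eq_toFinset_card']
  simp [card_filter_val_lt, hrq]

lemma ncard_setOf_le_val {q r : ℕ} (hrq : r ≤ q) : {j : Fin q | r ≤ (j : ℕ)}.ncard = q - r := by
  have := Set.ncard_compl {j : Fin q | (j : ℕ) < r}
  simp only [Set.compl_ofPred, not_lt, Nat.card_eq_fintype_card, Fintype.card_fin] at this
  rw [this, ncard_setOf_val_lt hrq]

lemma ne_zero_iff_val_lt_ncard_of_antitone {q : ℕ} {s : Fin q → ℝ} (hmono : Antitone s)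
    (hpos : ∀ j, 0 ≤ s j) (j : Fin q) : s j ≠ 0 ↔ (j : ℕ) < {i | s i ≠ 0}.ncard := by
  rw [Set.ncard_eq_toFinset_card', Set.toFinset_ofPred]
  refine (lt_card_filter_univ_iff_apply_of_imp (fun i => s i ≠ 0) fun i j hji hi hj => ?_).symm
  exact hi (le_antisymm (hj ▸ hmono hji) (hpos i))

lemma ncard_ne_zero_eq_add_of_eq_one {q r : ℕ} (hrq : r ≤ q) {x : Fin q → ℝ}
    (hx : ∀ j : Fin q, (j : ℕ) < r → x j = 1) :
    {j | x j ≠ 0}.ncard = r + {j : Fin q | r ≤ (j : ℕ) ∧ x j ≠ 0}.ncard := by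
  rw [ncard_ne_zero_eq_add (fun j : Fin q => r ≤ (j : ℕ)) fun j hj => by simp [hx j (not_le.1 hj)]]
  simp only [not_le, ncard_setOf_val_lt hrq]

end Fin

lemma triConstr_indicator_lt {q k : ℕ} (hkq : k ≤ q) :
    TriConstr k (fun j : Fin q => if (j : ℕ) < k then 1 else 0) := by
  refine ⟨fun j => by dsimp only; split_ifs <;> simp, ?_⟩
  simpa using Fin.ncard_setOf_val_lt hkq

lemma sum_sub_sq_of_triConstr {q k : ℕ} (s : Fin q → ℝ) {x : Fin q → ℝ} (hx : TriConstr k x) :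
    ∑ j, (s j - x j) ^ 2 = ∑ j, s j ^ 2 + k - 2 * ∑ j, s j * x j := by
  have hx2 : ∑ j, x j ^ 2 = k := hx.2 ▸ sum_sq_eq_ncard_of_ternary hx.1
  calc ∑ j, (s j - x j) ^ 2 = ∑ j, (s j ^ 2 - 2 * (s j * x j) + x j ^ 2) := by
        congr! 1 with j; ring
    _ = _ := by rw [sum_add_distrib, sum_sub_distrib, ← mul_sum, hx2]; ring

lemma triConstr_isMinimizer_iff {q k : ℕ} {s : Fin q → ℝ} (hs : ∀ j, 0 ≤ s j)
    {x₀ : Fin q → ℝ} (hx₀ : TriConstr k x₀) (hx₀s : ∀ j, s j ≠ 0 → x₀ j = 1)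
    {x : Fin q → ℝ} (hx : TriConstr k x) :
    (∀ y : Fin q → ℝ, TriConstr k y → ∑ j, (s j - x j) ^ 2 ≤ ∑ j, (s j - y j) ^ 2) ↔
      ∀ j, s j ≠ 0 → x j = 1 := by
  have hle_one : ∀ {y : Fin q → ℝ}, TriConstr k y → ∀ j, y j ≤ 1 := fun hy j => by
    rcases hy.1 j with h | h | h <;> norm_num [h]
  have hle : ∀ {y}, TriConstr k y →
      (∑ j, (s j - x j) ^ 2 ≤ ∑ j, (s j - y j) ^ 2 ↔ ∑ j, s j * y j ≤ ∑ j, s j * x j) := by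
    intro y hy
    rw [sum_sub_sq_of_triConstr s hx, sum_sub_sq_of_triConstr s hy]
    constructor <;> intro <;> linarith
  rw [← sum_mul_eq_sum_iff_of_le_one hs (hle_one hx)]
  constructor
  · intro hmin
    refine le_antisymm (sum_mul_le_sum_of_le_one hs (hle_one hx)) ?_
    rw [← (sum_mul_eq_sum_iff_of_le_one hs (hle_one hx₀)).2 hx₀s]
    exact (hle hx₀).1 (hmin x₀ hx₀)
  · intro hmax y hy
    exact (hle hy).2 (hmax ▸ sum_mul_le_sum_of_le_one hs (hle_one hy))

lemma triConstr_isMinimizer_iff_of_support {q r k : ℕ} {s : Fin q → ℝ} (hpos : ∀ j, 0 ≤ s j)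
    (hsupp : ∀ j : Fin q, s j ≠ 0 ↔ (j : ℕ) < r) (hrk : r ≤ k) (hkq : k ≤ q)
    {x : Fin q → ℝ} (hx : TriConstr k x) :
    (∀ y : Fin q → ℝ, TriConstr k y → ∑ j, (s j - x j) ^ 2 ≤ ∑ j, (s j - y j) ^ 2) ↔
      (∀ j : Fin q, (j : ℕ) < r → x j = 1) ∧
        {j : Fin q | r ≤ (j : ℕ) ∧ x j ≠ 0}.ncard = k - r := by
  have hx₀s (j : Fin q) (hj : s j ≠ 0) : (if (j : ℕ) < k then (1 : ℝ) else 0) = 1 :=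
    if_pos (((hsupp j).1 hj).trans_le hrk)
  simp only [triConstr_isMinimizer_iff hpos (triConstr_indicator_lt hkq) hx₀s hx, hsupp]
  refine ⟨fun hhead => ⟨hhead, ?_⟩, And.left⟩
  have := Fin.ncard_ne_zero_eq_add_of_eq_one (hrk.trans hkq) hhead
  have := hx.2
  omega

theorem stmt16 {q r k : ℕ} (s : Fin q → ℝ)
    (hmono : ∀ i j : Fin q, i ≤ j → s j ≤ s i) (hpos : ∀ j, 0 ≤ s j)
    (hs : {j : Fin q | s j ≠ 0}.ncard = r)
    (hrk : r < k) (hkq : k ≤ q) :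
    (∀ x : Fin q → ℝ, TriConstr k x →
      ((∀ y : Fin q → ℝ, TriConstr k y →
          (∑ j, (s j - x j) ^ 2) ≤ ∑ j, (s j - y j) ^ 2) ↔
        ((∀ j : Fin q, (j : ℕ) < r → x j = 1) ∧
          {j : Fin q | r ≤ (j : ℕ) ∧ x j ≠ 0}.ncard = k - r))) ∧
    {x : Fin q → ℝ | TriConstr k x ∧
        ∀ y : Fin q → ℝ, TriConstr k y →
          (∑ j, (s j - x j) ^ 2) ≤ ∑ j, (s j - y j) ^ 2}.ncard =
      2 ^ (k - r) * (q - r).choose (k - r) := by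
  have hsupp (j : Fin q) : s j ≠ 0 ↔ (j : ℕ) < r :=
    hs ▸ Fin.ne_zero_iff_val_lt_ncard_of_antitone (fun i j => hmono i j) hpos j
  have hchar (x : Fin q → ℝ) (hx : TriConstr k x) :=
    triConstr_isMinimizer_iff_of_support hpos hsupp hrk.le hkq hx
  have hminimizers : {x : Fin q → ℝ | TriConstr k x ∧ ∀ y : Fin q → ℝ, TriConstr k y →
      (∑ j, (s j - x j) ^ 2) ≤ ∑ j, (s j - y j) ^ 2} =
        {x | (∀ j, x j = -1 ∨ x j = 0 ∨ x j = 1) ∧ (∀ j : Fin q, ¬ r ≤ (j : ℕ) → x j = 1) ∧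
          {j : Fin q | r ≤ (j : ℕ) ∧ x j ≠ 0}.ncard = k - r} := by
    ext x
    simp only [Set.mem_ofPred_eq, not_le]
    constructor
    · rintro ⟨hx, hxmin⟩
      exact ⟨hx.1, (hchar x hx).1 hxmin⟩
    · rintro ⟨hx, hhead, htail⟩
      have hxk : TriConstr k x :=
        ⟨hx, by rw [Fin.ncard_ne_zero_eq_add_of_eq_one (hrk.trans_le hkq).le hhead, htail]; omega⟩
      exact ⟨hxk, (hchar x hxk).2 ⟨hhead, htail⟩⟩
  rw [hminimizers, ncard_ternary_pinned_eq, Fin.ncard_setOf_le_val (hrk.trans_le hkq).le]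
  exact ⟨hchar, rfl⟩
end
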